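/- Let G be a finite noncyclic group and N a normal subgroup of G. Then β(G) = β(G/N) if and only if N is cyclically embedded in G, i.e., the subgroup generated by N and x is cyclic for every x in G. -/

import Mathlib

/-- A cover of a group: a finite collection of proper subgroups whose union is the group. -/
def IsCover {G : Type*} [Group G] (S : Finset (Subgroup G)) : Prop :=
  (∀ H ∈ S, H ≠ ⊤) ∧ ∀ g : G, ∃ H ∈ S, g ∈ H

/-- An irredundant cover: a cover with no proper subcollection that is also a cover. -/
def IsIrredundantCover {G : Type*} [Group G] (S : Finset (Subgroup G)) : Prop :=
  IsCover S ∧ ∀ T : Finset (Subgroup G), T ⊂ S → ¬ IsCover T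

/-- β(G): the number of irredundant covers of G. -/
noncomputable def beta (G : Type*) [Group G] : ℕ :=
  Nat.card {S : Finset (Subgroup G) // IsIrredundantCover S}

/-- A maximal cyclic subgroup: cyclic, and not contained in any strictly larger cyclic subgroup. -/
def IsMaximalCyclic {G : Type*} [Group G] (C : Subgroup G) : Prop :=
  IsCyclic ↥C ∧ ∀ D : Subgroup G, IsCyclic ↥D → C ≤ D → D = C

/-- A cyclically embedded subgroup: ⟨N, x⟩ is cyclic for all x. -/
def CyclicallyEmbedded {G : Type*} [Group G] (N : Subgroup G) : Prop :=
  ∀ x : G, IsCyclic ↥(N ⊔ Subgroup.zpowers x)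

/-!
Pulling subgroups back along `G → G ⧸ N` identifies the irredundant covers of `G ⧸ N` with the
irredundant covers of `G` all of whose members contain `N`, so `β(G) = β(G ⧸ N)` exactly when every
member of every irredundant cover of `G` contains `N`. A cyclically embedded `N` has this property:
if `g` lies in `H` and in no other member, the member containing a generator of the cyclic group
`⟨N, g⟩` contains `g`, so it is `H`. Conversely, the maximal cyclic subgroups of a noncyclic group
form an irredundant cover; if they all contain `N`, then `⟨N, x⟩` lies in a maximal cyclic subgroup
through `x` and is therefore cyclic.
-/

open Function Subgroup

section Covers

variable {G : Type*} [Group G]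

theorem IsIrredundantCover.exists_mem_forall_mem_eq {S : Finset (Subgroup G)}
    (hS : IsIrredundantCover S) {H : Subgroup G} (hH : H ∈ S) :
    ∃ g ∈ H, ∀ K ∈ S, g ∈ K → K = H := by
  classical
  by_contra! hcon
  refine hS.2 (S.erase H) (Finset.erase_ssubset hH)
    ⟨fun K hK => hS.1.1 K (Finset.mem_of_mem_erase hK), fun g => ?_⟩
  obtain ⟨K, hK, hgK⟩ := hS.1.2 g
  by_cases hKH : K = H
  · obtain ⟨K', hK', hgK', hK'H⟩ := hcon g (hKH ▸ hgK)
    exact ⟨K', Finset.mem_erase.2 ⟨hK'H, hK'⟩, hgK'⟩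
  · exact ⟨K, Finset.mem_erase.2 ⟨hKH, hK⟩, hgK⟩

theorem CyclicallyEmbedded.le_of_mem_irredundantCover {N : Subgroup G}
    (hN : CyclicallyEmbedded N) {S : Finset (Subgroup G)} (hS : IsIrredundantCover S)
    {H : Subgroup G} (hH : H ∈ S) : N ≤ H := by
  obtain ⟨g, -, hg⟩ := hS.exists_mem_forall_mem_eq hH
  obtain ⟨c, hc⟩ := (Subgroup.isCyclic_iff_exists_zpowers_eq_top _).1 (hN g)
  obtain ⟨K, hK, hcK⟩ := hS.1.2 c
  have hNgK : N ⊔ zpowers g ≤ K := hc ▸ zpowers_le.2 hcK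
  obtain rfl := hg K hK (hNgK (mem_sup_right (mem_zpowers g)))
  exact le_sup_left.trans hNgK

end Covers

section MaximalCyclic

variable {G : Type*} [Group G]

theorem exists_isMaximalCyclic_mem [Finite G] (g : G) : ∃ C, IsMaximalCyclic C ∧ g ∈ C := by
  obtain ⟨C, hgC, hC⟩ := (Set.toFinite {D : Subgroup G | IsCyclic D}).exists_le_maximal
    (isCyclic_zpowers g)
  exact ⟨C, ⟨hC.prop, fun D hD hCD => (hC.eq_of_le hD hCD).symm⟩, zpowers_le.1 hgC⟩

theorem IsMaximalCyclic.ne_top (hG : ¬ IsCyclic G) {C : Subgroup G} (hC : IsMaximalCyclic C) :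
    C ≠ ⊤ := by
  rintro rfl
  obtain ⟨c, hc⟩ := (Subgroup.isCyclic_iff_exists_zpowers_eq_top ⊤).1 hC.1
  exact hG (isCyclic_iff_exists_zpowers_eq_top.2 ⟨c, hc⟩)

variable (G) in
noncomputable def maximalCyclicSubgroups [Finite G] : Finset (Subgroup G) :=
  (Set.toFinite {C : Subgroup G | IsMaximalCyclic C}).toFinset

theorem mem_maximalCyclicSubgroups [Finite G] {C : Subgroup G} :
    C ∈ maximalCyclicSubgroups G ↔ IsMaximalCyclic C :=
  Set.Finite.mem_toFinset _

theorem isIrredundantCover_maximalCyclicSubgroups [Finite G] (hG : ¬ IsCyclic G) :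
    IsIrredundantCover (maximalCyclicSubgroups G) := by
  refine ⟨⟨fun C hC => (mem_maximalCyclicSubgroups.1 hC).ne_top hG, fun g => ?_⟩, ?_⟩
  · obtain ⟨C, hC, hgC⟩ := exists_isMaximalCyclic_mem g
    exact ⟨C, mem_maximalCyclicSubgroups.2 hC, hgC⟩
  · rintro T hT ⟨-, hTcov⟩
    obtain ⟨C, hC, hCT⟩ := Finset.exists_of_ssubset hT
    have hC := mem_maximalCyclicSubgroups.1 hC
    -- a generator of a maximal cyclic subgroup lies in no other maximal cyclic subgroup
    obtain ⟨c, rfl⟩ := C.isCyclic_iff_exists_zpowers_eq_top.1 hC.1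
    obtain ⟨D, hD, hcD⟩ := hTcov c
    obtain rfl := hC.2 D (mem_maximalCyclicSubgroups.1 (hT.1 hD)).1 (zpowers_le.2 hcD)
    exact hCT hD

theorem cyclicallyEmbedded_of_forall_isMaximalCyclic_le [Finite G] {N : Subgroup G}
    (h : ∀ C, IsMaximalCyclic C → N ≤ C) : CyclicallyEmbedded N := by
  intro x
  obtain ⟨C, hC, hxC⟩ := exists_isMaximalCyclic_mem x
  have := hC.1
  exact isCyclic_of_le (sup_le (h C hC) (zpowers_le.2 hxC))

end MaximalCyclic

section Comap

open scoped Classical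

variable {G Q : Type*} [Group G] [Group Q] {f : G →* Q}

theorem isCover_image_comap (hf : Surjective f) {S : Finset (Subgroup Q)} :
    IsCover (S.image (comap f)) ↔ IsCover S := by
  simp only [IsCover, Finset.forall_mem_image, Finset.exists_mem_image, mem_comap,
    ((comap_injective hf).ne_iff' (comap_top f)), hf.forall]

theorem isIrredundantCover_image_comap (hf : Surjective f) {S : Finset (Subgroup Q)} :
    IsIrredundantCover (S.image (comap f)) ↔ IsIrredundantCover S := by
  have hinj := comap_injective hf
  refine and_congr (isCover_image_comap hf) ⟨fun h T hTS hT => ?_, fun h T hTS hT => ?_⟩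
  · exact h _ ((Finset.image_ssubset_image hinj).2 hTS) ((isCover_image_comap hf).2 hT)
  · obtain ⟨T, -, rfl⟩ := Finset.subset_image_iff.1 hTS.1
    exact h T ((Finset.image_ssubset_image hinj).1 hTS) ((isCover_image_comap hf).1 hT)

theorem image_comap_image_map {S : Finset (Subgroup G)} (hS : ∀ H ∈ S, f.ker ≤ H) :
    (S.image (map f)).image (comap f) = S := by
  rw [Finset.image_image]
  exact (Finset.image_congr fun H hH => comap_map_eq_self (hS H hH)).trans Finset.image_id

theorem beta_eq_beta_iff_forall_ker_le [Finite G] (hf : Surjective f) :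
    beta G = beta Q ↔ ∀ S : Finset (Subgroup G), IsIrredundantCover S → ∀ H ∈ S, f.ker ≤ H := by
  have : Finite Q := Finite.of_surjective f hf
  let pullback : {S : Finset (Subgroup Q) // IsIrredundantCover S} →
      {S : Finset (Subgroup G) // IsIrredundantCover S} :=
    fun S => ⟨S.1.image (comap f), (isIrredundantCover_image_comap hf).2 S.2⟩
  have hinj : Injective pullback := fun S T h =>
    Subtype.ext (Finset.image_injective (comap_injective hf) (congrArg Subtype.val h))
  calc beta G = beta Q ↔ Bijective pullback := by
        rw [Nat.bijective_iff_injective_and_card, eq_comm, beta, beta, and_iff_right hinj]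
    _ ↔ Surjective pullback := and_iff_right hinj
    _ ↔ _ := by
      refine ⟨fun h S hS H hH => ?_, fun h ⟨S, hS⟩ => ?_⟩
      · obtain ⟨T, hT⟩ := h ⟨S, hS⟩
        have hTS : T.1.image (comap f) = S := congrArg Subtype.val hT
        rw [← hTS] at hH
        obtain ⟨K, -, rfl⟩ := Finset.mem_image.1 hH
        exact ker_le_comap f K
      · have hS' := image_comap_image_map (h S hS)
        exact ⟨⟨S.image (map f), (isIrredundantCover_image_comap hf).1 (by rwa [hS'])⟩,
          Subtype.ext hS'⟩

end Comap

theorem stmt4 {G : Type*} [Group G] [Finite G] (hG : ¬ IsCyclic G)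
    (N : Subgroup G) [N.Normal] :
    beta G = beta (G ⧸ N) ↔ CyclicallyEmbedded N := by
  rw [beta_eq_beta_iff_forall_ker_le (QuotientGroup.mk'_surjective N), QuotientGroup.ker_mk']
  exact ⟨fun h => cyclicallyEmbedded_of_forall_isMaximalCyclic_le fun C hC =>
      h _ (isIrredundantCover_maximalCyclicSubgroups hG) C (mem_maximalCyclicSubgroups.2 hC),
    fun hN _ hS _ hH => hN.le_of_mem_irredundantCover hS hH⟩
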